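/- arXiv:2407.15576 — 2 statements merged into one kernel-verified Lean document; each statement's English description precedes it below -/
import Mathlib

section
/- Let K > 0, m > 0, θ > 0 with Kθ² < mπ², and let λ = θ√(K/m). Let N : [0,1] → ℝ be twice differentiable with N''(t) ≤ -(Kθ²/m) N(t) for all t ∈ [0,1]. Then for all t ∈ [0,1], N(t) ≥ (sin((1-t)λ)/sin λ) N(0) + (sin(tλ)/sin λ) N(1). -/
open Set Real

/-!
Subtracting the sine interpolant of the boundary values leaves a function `g` with
`g 0 = g 1 = 0` and `g'' + λ² g ≤ 0`. The Wronskian `g' s - λ g c` of `g` with `s = sin (t λ)`,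
`c = cos (t λ)` has derivative `(g'' + λ² g) s ≤ 0` and vanishes at `0`, so it is nonpositive; it
is the numerator of the derivative of `g / s`, which is therefore antitone on `(0, 1]`. As
`λ < π`, `s > 0` there, and `g / s` decreases to `g 1 / s 1 = 0`, whence `g ≥ 0`.
-/

lemma sin_mul_nonneg_of_mem_Icc {lam t : ℝ} (hlam : 0 ≤ lam) (hlamπ : lam ≤ π)
    (ht : t ∈ Icc (0 : ℝ) 1) : 0 ≤ sin (t * lam) :=
  sin_nonneg_of_nonneg_of_le_pi (mul_nonneg ht.1 hlam) <| by nlinarith [ht.2]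

lemma sin_mul_pos_of_mem_Ioc {lam t : ℝ} (hlam : 0 < lam) (hlamπ : lam < π)
    (ht : t ∈ Ioc (0 : ℝ) 1) : 0 < sin (t * lam) :=
  sin_pos_of_pos_of_lt_pi (mul_pos ht.1 hlam) <| by nlinarith [ht.2]

lemma hasDerivAt_sin_mul (lam t : ℝ) :
    HasDerivAt (fun s => sin (s * lam)) (cos (t * lam) * lam) t :=
  (hasDerivAt_mul_const lam).sin

lemma hasDerivAt_cos_mul (lam t : ℝ) :
    HasDerivAt (fun s => cos (s * lam)) (-sin (t * lam) * lam) t :=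
  (hasDerivAt_mul_const lam).cos

lemma hasDerivAt_sin_interpolant (lam a b t : ℝ) :
    HasDerivAt (fun s => sin ((1 - s) * lam) * a + sin (s * lam) * b)
      (lam * (cos (t * lam) * b - cos ((1 - t) * lam) * a)) t := by
  have h := ((((hasDerivAt_id' t).const_sub 1).mul_const lam).sin.mul_const a).add
    ((hasDerivAt_sin_mul lam t).mul_const b)
  exact h.congr_deriv (by ring)

lemma hasDerivAt_sin_interpolant_deriv (lam a b t : ℝ) :
    HasDerivAt (fun s => lam * (cos (s * lam) * b - cos ((1 - s) * lam) * a))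
      (-lam ^ 2 * (sin ((1 - t) * lam) * a + sin (t * lam) * b)) t := by
  have h := (((hasDerivAt_cos_mul lam t).mul_const b).sub
    ((((hasDerivAt_id' t).const_sub 1).mul_const lam).cos.mul_const a)).const_mul lam
  exact h.congr_deriv (by ring)

section Supersolution

variable {lam : ℝ} {g g' g'' : ℝ → ℝ}

lemma wronskian_sin_nonpos (hlam : 0 ≤ lam) (hlamπ : lam ≤ π)
    (hg' : ∀ t ∈ Icc (0 : ℝ) 1, HasDerivAt g (g' t) t)
    (hg'' : ∀ t ∈ Icc (0 : ℝ) 1, HasDerivAt g' (g'' t) t)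
    (hsuper : ∀ t ∈ Icc (0 : ℝ) 1, g'' t + lam ^ 2 * g t ≤ 0) (h0 : g 0 = 0) :
    ∀ t ∈ Icc (0 : ℝ) 1, g' t * sin (t * lam) - lam * g t * cos (t * lam) ≤ 0 := by
  set w := fun t => g' t * sin (t * lam) - lam * g t * cos (t * lam)
  have hw : ∀ t ∈ Icc (0 : ℝ) 1, HasDerivAt w ((g'' t + lam ^ 2 * g t) * sin (t * lam)) t := by
    intro t ht
    exact (((hg'' t ht).mul (hasDerivAt_sin_mul lam t)).sub
      (((hg' t ht).const_mul lam).mul (hasDerivAt_cos_mul lam t))).congr_deriv (by ring)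
  have hanti : AntitoneOn w (Icc 0 1) := by
    refine antitoneOn_of_hasDerivWithinAt_nonpos (convex_Icc 0 1)
      (fun t ht => (hw t ht).continuousAt.continuousWithinAt)
      (fun t ht => (hw t (interior_subset ht)).hasDerivWithinAt) fun t ht => ?_
    have ht := interior_subset ht
    exact mul_nonpos_of_nonpos_of_nonneg (hsuper t ht) (sin_mul_nonneg_of_mem_Icc hlam hlamπ ht)
  intro t ht
  have hw0 : w 0 = 0 := by simp [w, h0]
  have := hanti (left_mem_Icc.mpr zero_le_one) ht ht.1
  rwa [hw0] at this

lemma antitoneOn_div_sin_mul (hlam : 0 < lam) (hlamπ : lam < π)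
    (hg' : ∀ t ∈ Icc (0 : ℝ) 1, HasDerivAt g (g' t) t)
    (hwr : ∀ t ∈ Icc (0 : ℝ) 1, g' t * sin (t * lam) - lam * g t * cos (t * lam) ≤ 0) :
    AntitoneOn (fun t => g t / sin (t * lam)) (Ioc 0 1) := by
  have hs : ∀ t ∈ Ioc (0 : ℝ) 1, sin (t * lam) ≠ 0 := fun t ht =>
    (sin_mul_pos_of_mem_Ioc hlam hlamπ ht).ne'
  have hderiv : ∀ t ∈ Ioc (0 : ℝ) 1, HasDerivAt (fun t => g t / sin (t * lam))
      ((g' t * sin (t * lam) - lam * g t * cos (t * lam)) / sin (t * lam) ^ 2) t := by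
    intro t ht
    exact ((hg' t (Ioc_subset_Icc_self ht)).div (hasDerivAt_sin_mul lam t)
      (hs t ht)).congr_deriv (by ring)
  refine antitoneOn_of_hasDerivWithinAt_nonpos (convex_Ioc 0 1)
    (fun t ht => ?_) (fun t ht => (hderiv t (interior_subset ht)).hasDerivWithinAt) fun t ht =>
      div_nonpos_of_nonpos_of_nonneg (hwr t (Ioc_subset_Icc_self (interior_subset ht)))
        (sq_nonneg _)
  exact ((hg' t (Ioc_subset_Icc_self ht)).continuousAt.div
    (hasDerivAt_sin_mul lam t).continuousAt (hs t ht)).continuousWithinAt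

theorem nonneg_of_second_deriv_add_sq_mul_nonpos (hlam : 0 < lam) (hlamπ : lam < π)
    (hg' : ∀ t ∈ Icc (0 : ℝ) 1, HasDerivAt g (g' t) t)
    (hg'' : ∀ t ∈ Icc (0 : ℝ) 1, HasDerivAt g' (g'' t) t)
    (hsuper : ∀ t ∈ Icc (0 : ℝ) 1, g'' t + lam ^ 2 * g t ≤ 0) (h0 : g 0 = 0) (h1 : g 1 = 0) :
    ∀ t ∈ Icc (0 : ℝ) 1, 0 ≤ g t := by
  have hanti := antitoneOn_div_sin_mul hlam hlamπ hg'
    (wronskian_sin_nonpos hlam.le hlamπ.le hg' hg'' hsuper h0)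
  rintro t ⟨ht0, ht1⟩
  rcases ht0.eq_or_lt with rfl | ht0
  · exact h0.ge
  have ht : t ∈ Ioc (0 : ℝ) 1 := ⟨ht0, ht1⟩
  have hratio : 0 ≤ g t / sin (t * lam) := by
    simpa [h1] using hanti ht (right_mem_Ioc.mpr zero_lt_one) ht1
  exact (div_nonneg_iff.mp hratio).elim And.left fun h =>
    absurd h.2 (sin_mul_pos_of_mem_Ioc hlam hlamπ ht).not_ge

end Supersolution

theorem stmt_7 (K m θ : ℝ) (hK : 0 < K) (hm : 0 < m) (hθ : 0 < θ)
    (hbound : K * θ ^ 2 < m * π ^ 2) (lam : ℝ) (hlam : lam = θ * Real.sqrt (K / m))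
    (N N' N'' : ℝ → ℝ)
    (hN' : ∀ t ∈ Icc (0:ℝ) 1, HasDerivAt N (N' t) t)
    (hN'' : ∀ t ∈ Icc (0:ℝ) 1, HasDerivAt N' (N'' t) t)
    (hineq : ∀ t ∈ Icc (0:ℝ) 1, N'' t ≤ -(K * θ ^ 2 / m) * N t) :
    ∀ t ∈ Icc (0:ℝ) 1,
      (Real.sin ((1 - t) * lam) / Real.sin lam) * N 0 +
        (Real.sin (t * lam) / Real.sin lam) * N 1 ≤ N t := by
  have hpos : 0 < lam := hlam ▸ mul_pos hθ (sqrt_pos.mpr (div_pos hK hm))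
  have hsq : lam ^ 2 = K * θ ^ 2 / m := by
    rw [hlam, mul_pow, sq_sqrt (div_pos hK hm).le]; ring
  have hltπ : lam < π := by
    refine lt_of_pow_lt_pow_left₀ 2 pi_pos.le ?_
    rw [hsq, div_lt_iff₀ hm]
    linarith
  have hsin : sin lam ≠ 0 := (sin_pos_of_pos_of_lt_pi hpos hltπ).ne'
  have hg := nonneg_of_second_deriv_add_sq_mul_nonpos hpos hltπ
    (g := fun t => N t -
      (sin ((1 - t) * lam) * (N 0 / sin lam) + sin (t * lam) * (N 1 / sin lam)))
    (fun t ht => (hN' t ht).sub (hasDerivAt_sin_interpolant lam _ _ t))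
    (fun t ht => (hN'' t ht).sub (hasDerivAt_sin_interpolant_deriv lam _ _ t))
    (fun t ht => by linarith [hsq ▸ hineq t ht])
    (by simp [mul_div_cancel₀ _ hsin]) (by simp [mul_div_cancel₀ _ hsin])
  intro t ht
  linarith [hg t ht, show sin ((1 - t) * lam) / sin lam * N 0 + sin (t * lam) / sin lam * N 1
    = sin ((1 - t) * lam) * (N 0 / sin lam) + sin (t * lam) * (N 1 / sin lam) by ring]
end

section
/- Let m > 0, K ∈ ℝ, θ ≥ 0, and suppose H : (0,∞) → ℝ is twice differentiable and satisfies H''(t) + H'(t)²/m + Kθ² ≤ 0 for all t > 0. With W(t) = d/dt ( t (H(t) - (m/2)(1 + log(4πt²))) ), it follows that (1/t) W'(t) ≤ -Kθ² - (1/m)(H'(t) - m/t)² for all t > 0. In particular, if K ≥ 0 then W is nonincreasing on (0,∞). -/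
open Set Real

/-!
For `t > 0` the function `W` has the closed form `H + t H' - m - (m/2)(1 + log(4πt²))`, whose
derivative is `2H' + tH'' - m/t`. The scalar identity
`(1/t)(2a + tb - m/t) = b + a²/m - (1/m)(a - m/t)²` turns this into
`(1/t) W' = H'' + H'²/m - (1/m)(H' - m/t)²`, and the entropy differential inequality bounds the
first two terms by `-Kθ²`. For `K ≥ 0` the right-hand side is nonpositive, so `W` is antitone.
-/

theorem hasDerivAt_log_mul_sq {c t : ℝ} (hc : c ≠ 0) (ht : t ≠ 0) :
    HasDerivAt (fun s => log (c * s ^ 2)) (2 / t) t := by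
  convert ((hasDerivAt_pow 2 t).const_mul c).log (by positivity) using 1
  field_simp
  norm_num

noncomputable def wEntropy (m : ℝ) (H H' : ℝ → ℝ) (t : ℝ) : ℝ :=
  H t + t * H' t - m - m / 2 * (1 + log (4 * π * t ^ 2))

theorem hasDerivAt_mul_sub_entropy {m t : ℝ} {H H' : ℝ → ℝ} (ht : t ≠ 0)
    (hH : HasDerivAt H (H' t) t) :
    HasDerivAt (fun s => s * (H s - m / 2 * (1 + log (4 * π * s ^ 2)))) (wEntropy m H H' t) t := by
  have hlog := hasDerivAt_log_mul_sq (by positivity : 4 * π ≠ 0) ht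
  refine ((hasDerivAt_id' t).mul (hH.sub ((hlog.const_add 1).const_mul (m / 2)))).congr_deriv ?_
  rw [wEntropy, Pi.sub_apply]
  field_simp
  ring

theorem hasDerivAt_wEntropy {m t : ℝ} {H H' H'' : ℝ → ℝ} (ht : t ≠ 0)
    (hH : HasDerivAt H (H' t) t) (hH' : HasDerivAt H' (H'' t) t) :
    HasDerivAt (wEntropy m H H') (2 * H' t + t * H'' t - m / t) t := by
  have hlog := hasDerivAt_log_mul_sq (by positivity : 4 * π ≠ 0) ht
  refine (((hH.add ((hasDerivAt_id' t).mul hH')).sub_const m).sub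
    ((hlog.const_add 1).const_mul (m / 2))).congr_deriv ?_
  field_simp
  ring

theorem one_div_mul_eq_add_sq_div_sub {m t a b : ℝ} (hm : m ≠ 0) (ht : t ≠ 0) :
    1 / t * (2 * a + t * b - m / t) = b + a ^ 2 / m - 1 / m * (a - m / t) ^ 2 := by
  field_simp
  ring

theorem stmt_19_general (m K θ : ℝ) (hm : 0 < m) (H H' H'' : ℝ → ℝ)
    (hH' : ∀ t ∈ Ioi (0:ℝ), HasDerivAt H (H' t) t)
    (hH'' : ∀ t ∈ Ioi (0:ℝ), HasDerivAt H' (H'' t) t)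
    (hEDI : ∀ t ∈ Ioi (0:ℝ), H'' t + (H' t) ^ 2 / m + K * θ ^ 2 ≤ 0)
    (W : ℝ → ℝ)
    (hW : W = fun t => deriv
      (fun s => s * (H s - (m / 2) * (1 + Real.log (4 * π * s ^ 2)))) t) :
    (∀ t ∈ Ioi (0:ℝ),
      (1 / t) * deriv W t ≤ -(K * θ ^ 2) - (1 / m) * (H' t - m / t) ^ 2) ∧
    (0 ≤ K → AntitoneOn W (Ioi 0)) := by
  have hW_eq : EqOn W (wEntropy m H H') (Ioi 0) := fun t ht => by
    rw [hW]
    exact (hasDerivAt_mul_sub_entropy ht.ne' (hH' t ht)).deriv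
  have hW_deriv : ∀ t ∈ Ioi (0:ℝ), HasDerivAt W (2 * H' t + t * H'' t - m / t) t :=
    fun t ht => (hasDerivAt_wEntropy ht.ne' (hH' t ht) (hH'' t ht)).congr_of_eventuallyEq
      (hW_eq.eventuallyEq_of_mem (isOpen_Ioi.mem_nhds ht))
  have hbound : ∀ t ∈ Ioi (0:ℝ),
      (1 / t) * deriv W t ≤ -(K * θ ^ 2) - (1 / m) * (H' t - m / t) ^ 2 := fun t ht => by
    rw [(hW_deriv t ht).deriv, one_div_mul_eq_add_sq_div_sub hm.ne' ht.ne']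
    linarith [hEDI t ht]
  refine ⟨hbound, fun hK => antitoneOn_of_deriv_nonpos (convex_Ioi 0)
    (fun t ht => (hW_deriv t ht).continuousAt.continuousWithinAt) ?_ ?_⟩ <;> rw [interior_Ioi]
  · exact fun t ht => (hW_deriv t ht).differentiableAt.differentiableWithinAt
  · intro t ht
    have hrhs : -(K * θ ^ 2) - (1 / m) * (H' t - m / t) ^ 2 ≤ 0 := by
      have : 0 ≤ K * θ ^ 2 := by positivity
      have : 0 ≤ (1 / m) * (H' t - m / t) ^ 2 := by positivity
      linarith
    exact nonpos_of_mul_nonpos_right ((hbound t ht).trans hrhs) (one_div_pos.2 ht)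

theorem stmt_19 (m K θ : ℝ) (hm : 0 < m) (hθ : 0 ≤ θ) (H H' H'' : ℝ → ℝ)
    (hH' : ∀ t ∈ Ioi (0:ℝ), HasDerivAt H (H' t) t)
    (hH'' : ∀ t ∈ Ioi (0:ℝ), HasDerivAt H' (H'' t) t)
    (hEDI : ∀ t ∈ Ioi (0:ℝ), H'' t + (H' t) ^ 2 / m + K * θ ^ 2 ≤ 0)
    (W : ℝ → ℝ)
    (hW : W = fun t => deriv
      (fun s => s * (H s - (m / 2) * (1 + Real.log (4 * π * s ^ 2)))) t) :
    (∀ t ∈ Ioi (0:ℝ),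
      (1 / t) * deriv W t ≤ -(K * θ ^ 2) - (1 / m) * (H' t - m / t) ^ 2) ∧
    (0 ≤ K → AntitoneOn W (Ioi 0)) :=
  stmt_19_general m K θ hm H H' H'' hH' hH'' hEDI W hW
end
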